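/- Let K be a field and n ≥ 2. Two linear hyperplanes H₁ and H₂ of M_n(K) are equivalent (i.e. H₂ = P H₁ Q for some invertible P, Q ∈ GL_n(K)) if and only if the nonzero matrices in their orthogonal complements (with respect to the trace form tr(AB)) have the same rank. Consequently, there are exactly n equivalence classes of linear hyperplanes of M_n(K). -/

import Mathlib

/-!
The trace form identifies `M_n(K)` with its dual, so a hyperplane `H` is the kernel of
`M ↦ tr (A * M)` for a nonzero `A`, unique up to a scalar. Since `tr (B * (P * M * Q)) =
tr (Q * B * P * M)`, multiplying `H` by invertible matrices on both sides multiplies `A` by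
invertible matrices on both sides, and two matrices are equivalent in this sense exactly when
they have the same rank. Every rank `1, …, n` occurs, which gives `n` classes.
-/

/-- Two subspaces of matrices are equivalent if one is obtained from the other
by multiplying on the left and on the right by fixed invertible matrices. -/
def MatEquiv {K : Type*} [Field K] {n : ℕ}
    (H₁ H₂ : Submodule K (Matrix (Fin n) (Fin n) K)) : Prop :=
  ∃ P Q : Matrix (Fin n) (Fin n) K, IsUnit P ∧ IsUnit Q ∧
    (H₂ : Set (Matrix (Fin n) (Fin n) K)) = (fun M => P * M * Q) '' H₁

/-- The orthogonal complement of a set of matrices with respect to the trace form. -/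
def traceOrth {K : Type*} [Field K] {n : ℕ}
    (H : Submodule K (Matrix (Fin n) (Fin n) K)) : Set (Matrix (Fin n) (Fin n) K) :=
  {A | ∀ M ∈ H, (A * M).trace = 0}

open Module LinearMap

theorem Module.Dual.exists_smul_eq_of_ker_eq {K V : Type*} [Field K] [AddCommGroup V] [Module K V]
    [FiniteDimensional K V] {f g : Dual K V} (hf : f ≠ 0) (h : ker f = ker g) :
    ∃ c : K, g = c • f := by
  obtain ⟨x, hx⟩ : ∃ x, f x ≠ 0 := by by_contra! h0; exact hf (LinearMap.ext h0)
  have hgx : g x ≠ 0 := by rwa [ne_eq, ← mem_ker, ← h, mem_ker]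
  refine ⟨g x / f x, (eq_of_ker_eq_of_apply_eq x ?_ ?_ ?_).symm⟩
  · rw [← h, ker_smul _ _ (div_ne_zero hgx hx)]
  · simp [hx]
  · simp [hx, hgx]

namespace Matrix

variable {K ι : Type*} [Field K] [Fintype ι] [DecidableEq ι]

theorem rank_eq_zero_iff {m : Type*} {A : Matrix m ι K} : A.rank = 0 ↔ A = 0 := by
  rw [rank, Submodule.finrank_eq_zero, range_eq_bot, ← toLin'_apply', map_eq_zero_iff _
    toLin'.injective]

theorem exists_rank_eq {r : ℕ} (hr : r ≤ Fintype.card ι) : ∃ A : Matrix ι ι K, A.rank = r := by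
  classical
  obtain ⟨s, -, hs⟩ := Finset.exists_subset_card_eq (s := (Finset.univ : Finset ι)) hr
  refine ⟨diagonal fun i => if i ∈ s then 1 else 0, ?_⟩
  rw [rank_diagonal, ← hs, ← Fintype.card_coe]
  exact Fintype.card_congr (Equiv.subtypeEquivRight fun i => by simp)

theorem exists_isUnit_mul_mul_eq_of_rank_eq {A B : Matrix ι ι K} (h : A.rank = B.rank) :
    ∃ P Q : Matrix ι ι K, IsUnit P ∧ IsUnit Q ∧ P * A * Q = B := by
  have normal_form (M : Matrix ι ι K) (hM : M.rank = A.rank) :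
      ∃ (V U : Matrix ι ι K) (e : ι ≃ Fin A.rank ⊕ Fin (Fintype.card ι - A.rank)),
        IsUnit V ∧ IsUnit U ∧ V * M * U = (fromBlocks 1 0 0 0).submatrix e e := by
    rw [← hM]; exact exists_rank_normal_form M
  obtain ⟨V, U, e, ⟨v, rfl⟩, ⟨u, rfl⟩, hA⟩ := normal_form A rfl
  obtain ⟨V', U', e', ⟨v', rfl⟩, ⟨u', rfl⟩, hB⟩ := normal_form B h.symm
  set S : Matrix ι ι K := (1 : Matrix _ _ K).submatrix e' e
  set S' : Matrix ι ι K := (1 : Matrix _ _ K).submatrix e e'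
  have hSS' : S * S' = 1 := by simp [S, S', submatrix_mul_equiv]
  have hS'S : S' * S = 1 := by simp [S, S', submatrix_mul_equiv]
  have hconj :
      S * (fromBlocks 1 0 0 0).submatrix e e * S' = (fromBlocks 1 0 0 0).submatrix e' e' := by
    simp [S, S', submatrix_mul_equiv]
  refine ⟨(↑v'⁻¹ : Matrix ι ι K) * S * v, u * S' * (↑u'⁻¹ : Matrix ι ι K), ?_, ?_, ?_⟩
  · exact ((Units.isUnit _).mul (isUnit_iff_exists.2 ⟨S', hSS', hS'S⟩)).mul (Units.isUnit _)
  · exact ((Units.isUnit _).mul (isUnit_iff_exists.2 ⟨S, hS'S, hSS'⟩)).mul (Units.isUnit _)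
  · calc (↑v'⁻¹ : Matrix ι ι K) * S * v * A * (u * S' * (↑u'⁻¹ : Matrix ι ι K))
        = ↑v'⁻¹ * (S * (v * A * u) * S') * ↑u'⁻¹ := by simp only [mul_assoc]
      _ = B := by rw [hA, hconj, ← hB]; simp [mul_assoc]

variable (K ι) in
noncomputable def traceDual : Matrix ι ι K →ₗ[K] Dual K (Matrix ι ι K) :=
  (LinearMap.mul K (Matrix ι ι K)).compr₂ (traceLinearMap ι K K)

@[simp]
theorem traceDual_apply (A M : Matrix ι ι K) : traceDual K ι A M = (A * M).trace := rfl

theorem traceDual_injective : Function.Injective (traceDual K ι) := fun _ _ h =>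
  ext_iff_trace_mul_right.2 fun M => LinearMap.congr_fun h M

theorem traceDual_surjective : Function.Surjective (traceDual K ι) :=
  (injective_iff_surjective_of_finrank_eq_finrank Subspace.dual_finrank_eq.symm).1
    traceDual_injective

theorem image_mul_mul_ker_traceDual (P Q : (Matrix ι ι K)ˣ) (B : Matrix ι ι K) :
    (fun M => (P : Matrix ι ι K) * M * Q) '' ker (traceDual K ι (Q * B * P)) =
      ker (traceDual K ι B) := by
  let P' : Matrix ι ι K := ↑P⁻¹
  let Q' : Matrix ι ι K := ↑Q⁻¹
  rw [Set.image_eq_preimage_of_inverse (g := fun M => P' * M * Q')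
    (fun M => by simp [P', Q', mul_assoc]) (fun M => by simp [P', Q', mul_assoc])]
  ext N
  simp only [Set.mem_preimage, SetLike.mem_coe, mem_ker, traceDual_apply]
  have hcancel : Q * B * P * (P' * N * Q') = Q * (B * N) * Q' := by simp [P', Q', mul_assoc]
  rw [hcancel, trace_mul_cycle]
  simp [Q']

theorem rank_units_mul_mul (P Q : (Matrix ι ι K)ˣ) (A : Matrix ι ι K) :
    ((P : Matrix ι ι K) * A * Q).rank = A.rank := by
  rw [rank_mul_eq_left_of_isUnit_det _ _ ((isUnit_iff_isUnit_det _).1 Q.isUnit),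
    rank_mul_eq_right_of_isUnit_det _ _ ((isUnit_iff_isUnit_det _).1 P.isUnit)]

theorem rank_eq_of_ker_traceDual_eq {A B : Matrix ι ι K} (hA : A ≠ 0) (hB : B ≠ 0)
    (h : ker (traceDual K ι A) = ker (traceDual K ι B)) : A.rank = B.rank := by
  obtain ⟨c, hc⟩ := Dual.exists_smul_eq_of_ker_eq ((map_ne_zero_iff _ traceDual_injective).2 hA) h
  rw [← map_smul] at hc
  obtain rfl := traceDual_injective hc
  have hc0 : c ≠ 0 := by rintro rfl; simp at hB
  rw [rank_smul_of_mem_nonZeroDivisors _ (mem_nonZeroDivisors_of_ne_zero hc0)]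

end Matrix

section Hyperplane

open Matrix

variable {K : Type*} [Field K] {n : ℕ}

-- For `n = 0` the truncated `n ^ 2 - 1` makes this the single subspace `⊤ = ⊥`.
variable (K n) in
abbrev Hyperplane : Type _ :=
  {H : Submodule K (Matrix (Fin n) (Fin n) K) // finrank K H = n ^ 2 - 1}

theorem finrank_matrix_fin : finrank K (Matrix (Fin n) (Fin n) K) = n ^ 2 := by
  rw [finrank_matrix, finrank_self, Fintype.card_fin, mul_one, sq]

theorem finrank_ker_traceDual {A : Matrix (Fin n) (Fin n) K} (hA : A ≠ 0) :
    finrank K (ker (traceDual K (Fin n) A)) = n ^ 2 - 1 := by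
  have h := Dual.finrank_ker_add_one_of_ne_zero ((map_ne_zero_iff _ traceDual_injective).2 hA)
  rw [finrank_matrix_fin] at h
  omega

theorem mem_traceOrth_iff_le_ker {H : Submodule K (Matrix (Fin n) (Fin n) K)}
    {A : Matrix (Fin n) (Fin n) K} : A ∈ traceOrth H ↔ H ≤ ker (traceDual K (Fin n) A) :=
  Iff.rfl

theorem exists_mem_traceOrth_ne_zero (hn : n ≠ 0) {H : Submodule K (Matrix (Fin n) (Fin n) K)}
    (hH : finrank K H = n ^ 2 - 1) : ∃ A ∈ traceOrth H, A ≠ 0 := by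
  have hlt : H < ⊤ := Submodule.lt_top_of_finrank_lt_finrank <| by
    rw [hH, finrank_matrix_fin]
    exact Nat.sub_lt (pow_pos (Nat.pos_of_ne_zero hn) 2) one_pos
  obtain ⟨f, hf, hHf⟩ := H.exists_le_ker_of_lt_top hlt
  obtain ⟨A, rfl⟩ := traceDual_surjective f
  exact ⟨A, hHf, by rintro rfl; simp at hf⟩

theorem eq_ker_traceDual_of_mem_traceOrth {H : Submodule K (Matrix (Fin n) (Fin n) K)}
    (hH : finrank K H = n ^ 2 - 1) {A : Matrix (Fin n) (Fin n) K} (hA : A ∈ traceOrth H)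
    (hA0 : A ≠ 0) : H = ker (traceDual K (Fin n) A) :=
  Submodule.eq_of_le_of_finrank_eq hA (by rw [hH, finrank_ker_traceDual hA0])

theorem matEquiv_ker_traceDual_iff {A B : Matrix (Fin n) (Fin n) K} (hA : A ≠ 0) (hB : B ≠ 0) :
    MatEquiv (ker (traceDual K _ A)) (ker (traceDual K _ B)) ↔ A.rank = B.rank := by
  constructor
  · rintro ⟨_, _, ⟨P, rfl⟩, ⟨Q, rfl⟩, hPQ⟩
    rw [← image_mul_mul_ker_traceDual P Q B] at hPQ
    have hker := Set.image_injective.2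
      (Q.isUnit.mul_left_injective.comp P.isUnit.mul_right_injective) hPQ
    have hrank := rank_units_mul_mul Q P B
    have hQBP : (Q : Matrix (Fin n) (Fin n) K) * B * P ≠ 0 := by
      rwa [ne_eq, ← Matrix.rank_eq_zero_iff, hrank, Matrix.rank_eq_zero_iff]
    rw [rank_eq_of_ker_traceDual_eq hA hQBP (SetLike.coe_injective hker.symm), hrank]
  · intro h
    obtain ⟨_, _, ⟨P, rfl⟩, ⟨Q, rfl⟩, rfl⟩ := exists_isUnit_mul_mul_eq_of_rank_eq h
    refine ⟨↑Q⁻¹, ↑P⁻¹, Units.isUnit _, Units.isUnit _, ?_⟩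
    simpa [mul_assoc] using
      (image_mul_mul_ker_traceDual Q⁻¹ P⁻¹ ((P : Matrix (Fin n) (Fin n) K) * A * Q)).symm

theorem matEquiv_iff_rank_eq {H₁ H₂ : Submodule K (Matrix (Fin n) (Fin n) K)}
    (hH₁ : finrank K H₁ = n ^ 2 - 1) (hH₂ : finrank K H₂ = n ^ 2 - 1)
    {A B : Matrix (Fin n) (Fin n) K} (hA : A ∈ traceOrth H₁) (hA0 : A ≠ 0)
    (hB : B ∈ traceOrth H₂) (hB0 : B ≠ 0) : MatEquiv H₁ H₂ ↔ A.rank = B.rank := by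
  obtain rfl := eq_ker_traceDual_of_mem_traceOrth hH₁ hA hA0
  obtain rfl := eq_ker_traceDual_of_mem_traceOrth hH₂ hB hB0
  exact matEquiv_ker_traceDual_iff hA0 hB0

theorem matEquiv_iff_forall_rank_eq (hn : n ≠ 0) {H₁ H₂ : Submodule K (Matrix (Fin n) (Fin n) K)}
    (hH₁ : finrank K H₁ = n ^ 2 - 1) (hH₂ : finrank K H₂ = n ^ 2 - 1) :
    MatEquiv H₁ H₂ ↔ ∀ A B : Matrix (Fin n) (Fin n) K, A ∈ traceOrth H₁ → B ∈ traceOrth H₂ →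
      A ≠ 0 → B ≠ 0 → A.rank = B.rank := by
  obtain ⟨A₀, hA₀, hA₀0⟩ := exists_mem_traceOrth_ne_zero hn hH₁
  obtain ⟨B₀, hB₀, hB₀0⟩ := exists_mem_traceOrth_ne_zero hn hH₂
  exact ⟨fun h A B hA hB hA0 hB0 => (matEquiv_iff_rank_eq hH₁ hH₂ hA hA0 hB hB0).1 h,
    fun h => (matEquiv_iff_rank_eq hH₁ hH₂ hA₀ hA₀0 hB₀ hB₀0).2 (h _ _ hA₀ hB₀ hA₀0 hB₀0)⟩

theorem matEquiv_equivalence (hn : n ≠ 0) :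
    Equivalence (fun H₁ H₂ : Hyperplane K n => MatEquiv H₁.1 H₂.1) := by
  have orth (H : Hyperplane K n) :=
    exists_mem_traceOrth_ne_zero hn H.2
  refine ⟨fun H => ?_, fun {H₁ H₂} h => ?_, fun {H₁ H₂ H₃} h₁₂ h₂₃ => ?_⟩
  · obtain ⟨A, hA, hA0⟩ := orth H
    exact (matEquiv_iff_rank_eq H.2 H.2 hA hA0 hA hA0).2 rfl
  · obtain ⟨A, hA, hA0⟩ := orth H₁
    obtain ⟨B, hB, hB0⟩ := orth H₂
    exact (matEquiv_iff_rank_eq H₂.2 H₁.2 hB hB0 hA hA0).2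
      ((matEquiv_iff_rank_eq H₁.2 H₂.2 hA hA0 hB hB0).1 h).symm
  · obtain ⟨A, hA, hA0⟩ := orth H₁
    obtain ⟨B, hB, hB0⟩ := orth H₂
    obtain ⟨C, hC, hC0⟩ := orth H₃
    exact (matEquiv_iff_rank_eq H₁.2 H₃.2 hA hA0 hC hC0).2
      (((matEquiv_iff_rank_eq H₁.2 H₂.2 hA hA0 hB hB0).1 h₁₂).trans
        ((matEquiv_iff_rank_eq H₂.2 H₃.2 hB hB0 hC hC0).1 h₂₃))

theorem card_quot_matEquiv (hn : n ≠ 0) :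
    Nat.card (Quot (fun H₁ H₂ : Hyperplane K n => MatEquiv H₁.1 H₂.1)) = n := by
  choose D hD using fun k : Fin n =>
    exists_rank_eq (K := K) (ι := Fin n) (r := k + 1) (by simp)
  have hD0 (k : Fin n) : D k ≠ 0 := by rw [ne_eq, ← Matrix.rank_eq_zero_iff, hD]; omega
  have hD_orth (k : Fin n) : D k ∈ traceOrth (ker (traceDual K _ (D k))) :=
    mem_traceOrth_iff_le_ker.2 le_rfl
  let F (k : Fin n) : Quot (fun H₁ H₂ : Hyperplane K n => MatEquiv H₁.1 H₂.1) :=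
    Quot.mk _ ⟨ker (traceDual K _ (D k)), finrank_ker_traceDual (hD0 k)⟩
  have hF : Function.Bijective F := by
    constructor
    · intro k l hkl
      have h := (matEquiv_equivalence hn).eqvGen_iff.1 (Quot.eqvGen_exact hkl)
      rw [matEquiv_ker_traceDual_iff (hD0 k) (hD0 l), hD, hD] at h
      exact Fin.ext (by omega)
    · refine Quot.ind fun H => ?_
      obtain ⟨A, hA, hA0⟩ := exists_mem_traceOrth_ne_zero hn H.2
      have hA_pos : A.rank ≠ 0 := mt Matrix.rank_eq_zero_iff.1 hA0
      have hA_le : A.rank ≤ n := rank_le_width A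
      refine ⟨⟨A.rank - 1, by omega⟩, Quot.sound ?_⟩
      rw [matEquiv_iff_rank_eq (finrank_ker_traceDual (hD0 _)) H.2 (hD_orth _) (hD0 _) hA hA0, hD]
      simp only
      omega
  simpa using (Nat.card_eq_of_bijective F hF).symm

end Hyperplane

theorem stmt_5 {K : Type*} [Field K] {n : ℕ} (hn : 2 ≤ n) :
    (∀ H₁ H₂ : Submodule K (Matrix (Fin n) (Fin n) K),
      Module.finrank K H₁ = n ^ 2 - 1 → Module.finrank K H₂ = n ^ 2 - 1 →
      (MatEquiv H₁ H₂ ↔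
        ∀ A B : Matrix (Fin n) (Fin n) K, A ∈ traceOrth H₁ → B ∈ traceOrth H₂ →
          A ≠ 0 → B ≠ 0 → A.rank = B.rank)) ∧
    Nat.card (Quot (fun H₁ H₂ :
        {H : Submodule K (Matrix (Fin n) (Fin n) K) // Module.finrank K H = n ^ 2 - 1} =>
        MatEquiv H₁.1 H₂.1)) = n :=
  ⟨fun _ _ => matEquiv_iff_forall_rank_eq (by omega), card_quot_matEquiv (by omega)⟩
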